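/- Let N' ≥ 1, let p_1,...,p_{N'} be reals with 0 ≤ p_1 ≤ ... ≤ p_{N'}, let L ≥ 0, and let k ≥ 1 and l ≥ 1 be reals. Define q_j = max(0, p_j − L) and r_j = k·p_j + l·q_j. Then max over (σ_1,...,σ_{N'}) ∈ {−1,1}^{N'} of [Σ_{j=1}^{N'} σ_j·((k−1)·p_j + (l+1)·q_j) − Σ_{1≤j<j'≤N'} σ_j·σ_{j'}·r_j] equals max( max over σ ∈ {−1,1}^{N'} of [Σ_{j=1}^{N'} σ_j·((k−1)·p_j + (l−1)·q_j) − Σ_{1≤j<j'≤N'} σ_j·σ_{j'}·r_j], max over σ ∈ {−1,1}^{N'} of [Σ_{j=1}^{N'} σ_j·((k+1)·p_j + (l−1)·q_j) − Σ_{1≤j<j'≤N'} σ_j·σ_{j'}·r_j] − 2L ). -/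

import Mathlib

open Finset

/-- Maximum over all sign choices `(σ_1,...,σ_N) ∈ {−1,1}^N` of
`Σ_j σ_j a_j − Σ_{j<j'} σ_j σ_{j'} r_j`. -/
noncomputable def sigMax (N : ℕ) (a r : Fin N → ℝ) : ℝ :=
  Finset.univ.sup' Finset.univ_nonempty fun σ : Fin N → Bool =>
    (∑ j, (if σ j then (1 : ℝ) else -1) * a j) -
      ∑ j, ∑ j', if j < j' then
        (if σ j then (1 : ℝ) else -1) * (if σ j' then (1 : ℝ) else -1) * r j else 0

/-!
Write `s_j = Σ_{i ≥ j} σ_i` for the suffix sums of a sign vector, so that `s_j` is an integer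
with the parity of its number of terms. Summation by parts turns the energy
`Σ_j σ_j a_j - Σ_{j<j'} σ_j σ_{j'} r_j` into `Σ_j (Δa_j s_j - Δr_j s_j² / 2) + Σ_j r_j / 2`, with
`Δ` the backward difference: a sum of independent concave terms, one per site. When
`0 ≤ Δa_j ≤ 2 Δr_j`, the term of site `j` is maximised over integers of the right parity at
`s_j = 1` or at `s_j ∈ {0, 2}`, and these choices are the suffix sums of one sign vector, so the
maximum over all sign vectors is an explicit sum of site maxima.

For the profiles of the theorem `0 ≤ Δq ≤ Δp`, and comparing site maxima shows that the
`(k - 1, l - 1)` maximum never exceeds the `(k - 1, l + 1)` one, while the `(k + 1, l - 1)` profile,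
the reflection `a ↦ 2r - a` of the latter, exceeds it by exactly `2 (p_last - q_last)`. This is
`2L` when `p_last ≥ L`; otherwise `q` vanishes and the first two maxima coincide.
-/

noncomputable section

/-- Backward difference, with the convention `f (-1) = 0`. -/
def backDiff (f : ℕ → ℝ) : ℕ → ℝ
  | 0 => f 0
  | j + 1 => f (j + 1) - f j

theorem backDiff_linear_comb (α β : ℝ) (f g : ℕ → ℝ) (j : ℕ) :
    backDiff (fun n => α * f n + β * g n) j = α * backDiff f j + β * backDiff g j := by
  cases j with
  | zero => rfl
  | succ j => simp only [backDiff]; ring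

theorem sum_range_succ_backDiff (f : ℕ → ℝ) (n : ℕ) :
    ∑ j ∈ range (n + 1), backDiff f j = f n := by
  induction n with
  | zero => simp [backDiff]
  | succ n ih => rw [sum_range_succ, ih, backDiff]; ring

theorem sum_mul_sub_succ_eq_sum_backDiff_mul (f s : ℕ → ℝ) {N : ℕ} (hs : s N = 0) :
    ∑ j ∈ range N, f j * (s j - s (j + 1)) = ∑ j ∈ range N, backDiff f j * s j := by
  have summation_by_parts : ∀ n, ∑ j ∈ range (n + 1), f j * (s j - s (j + 1)) =
      ∑ j ∈ range (n + 1), backDiff f j * s j - f n * s (n + 1) := by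
    intro n
    induction n with
    | zero => simp [backDiff]; ring
    | succ n ih => rw [sum_range_succ, ih, sum_range_succ _ (n + 1), backDiff]; ring
  cases N with
  | zero => simp
  | succ n => rw [summation_by_parts, hs, mul_zero, sub_zero]

theorem backDiff_nonneg_of_monotone {f : ℕ → ℝ} (hf : Monotone f) (h0 : 0 ≤ f 0) (j : ℕ) :
    0 ≤ backDiff f j := by
  cases j with
  | zero => exact h0
  | succ j => exact sub_nonneg.2 (hf j.le_succ)

theorem backDiff_max_sub_le {f : ℕ → ℝ} (hf : Monotone f) (h0 : 0 ≤ f 0) {L : ℝ} (hL : 0 ≤ L)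
    (j : ℕ) : backDiff (fun n => max 0 (f n - L)) j ≤ backDiff f j := by
  cases j with
  | zero => exact max_le h0 (by simp only [backDiff]; linarith)
  | succ j =>
    simp only [backDiff]
    have := hf j.le_succ
    rcases le_total (f j) L with h | h <;> rcases le_total (f (j + 1)) L with h' | h' <;>
      simp only [max_eq_left, max_eq_right, sub_nonpos, sub_nonneg, h, h'] <;> linarith

def siteValue (e d s : ℝ) : ℝ := e * s - d * s ^ 2 / 2

def siteMax (n : ℕ) (e d : ℝ) : ℝ := if Odd n then e - d / 2 else max 0 (2 * e - 2 * d)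

def siteArgmax (n : ℕ) (e d : ℝ) : ℤ := if Odd n then 1 else if d < e then 2 else 0

theorem siteValue_siteArgmax (n : ℕ) (e d : ℝ) :
    siteValue e d (siteArgmax n e d) = siteMax n e d := by
  unfold siteValue siteArgmax siteMax
  split_ifs with hn hde
  · push_cast; ring
  · rw [max_eq_right (by linarith)]; push_cast; ring
  · rw [max_eq_left (by linarith)]; push_cast; ring

theorem siteValue_le_siteMax {e d : ℝ} (he : 0 ≤ e) (hed : e ≤ 2 * d) {n : ℕ} {s : ℤ}
    (hs : Even (s - n)) : siteValue e d s ≤ siteMax n e d := by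
  have hd : 0 ≤ d := by linarith
  unfold siteValue siteMax
  split_ifs with hn
  · obtain ⟨t, rfl⟩ : Odd s := by simpa using hs.add_odd (hn.natCast (R := ℤ))
    have key : (t : ℝ) * (e - d * (t + 1)) ≤ 0 := by
      rcases (by omega : t ≤ -1 ∨ t = 0 ∨ 1 ≤ t) with h | rfl | h
      · have h' : (t : ℝ) ≤ -1 := by exact_mod_cast h
        exact mul_nonpos_of_nonpos_of_nonneg (by linarith) (by nlinarith)
      · simp
      · have h' : (1 : ℝ) ≤ t := by exact_mod_cast h
        exact mul_nonpos_of_nonneg_of_nonpos (by linarith) (by nlinarith)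
    push_cast
    nlinarith
  · obtain ⟨t, rfl⟩ : Even s := by
      simpa using hs.add ((Nat.not_odd_iff_even.1 hn).natCast (α := ℤ))
    rcases le_or_gt t 0 with h | h
    · have h' : (t : ℝ) ≤ 0 := by exact_mod_cast h
      refine le_trans ?_ (le_max_left _ _)
      push_cast
      nlinarith
    · have h' : (1 : ℝ) ≤ t := by exact_mod_cast h
      have key : ((t : ℝ) - 1) * (e - d * (t + 1)) ≤ 0 :=
        mul_nonpos_of_nonneg_of_nonpos (by linarith) (by nlinarith)
      refine le_trans ?_ (le_max_right _ _)
      push_cast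
      nlinarith

theorem energy_eq_sum_siteValue (N : ℕ) (ε a r : ℕ → ℝ) (hε : ∀ j < N, ε j ^ 2 = 1) :
    ∑ j ∈ range N, ε j * a j -
        ∑ j ∈ range N, ∑ j' ∈ range N, (if j < j' then ε j * ε j' * r j else 0) =
      ∑ j ∈ range N, siteValue (backDiff a j) (backDiff r j) (∑ i ∈ Ico j N, ε i) +
        (∑ j ∈ range N, r j) / 2 := by
  set s : ℕ → ℝ := fun j => ∑ i ∈ Ico j N, ε i with hs
  have hsN : s N = 0 := by simp [hs]
  have hstep : ∀ j < N, s j = ε j + s (j + 1) := fun j hj => sum_eq_sum_Ico_succ_bot hj ε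
  have hpairs : ∀ j ∈ range N, ∑ j' ∈ range N, (if j < j' then ε j * ε j' * r j else 0) =
      r j * (s j ^ 2 - s (j + 1) ^ 2) / 2 - r j / 2 := by
    intro j hj
    have hj : j < N := mem_range.1 hj
    have hfilter : (range N).filter (j < ·) = Ico (j + 1) N := by
      ext i; simp only [mem_filter, mem_range, mem_Ico]; omega
    have hsuffix : ∑ i ∈ Ico (j + 1) N, ε j * ε i * r j = ε j * r j * s (j + 1) := by
      rw [hs, mul_sum]; exact sum_congr rfl fun i _ => by ring
    rw [← sum_filter, hfilter, hsuffix, hstep j hj]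
    linear_combination (-r j / 2) * hε j hj
  have hsign : ∀ j ∈ range N, ε j * a j = a j * (s j - s (j + 1)) := by
    intro j hj
    rw [hstep j (mem_range.1 hj)]; ring
  rw [sum_congr rfl hpairs, sum_congr rfl hsign, sum_sub_distrib, ← sum_div,
    sum_mul_sub_succ_eq_sum_backDiff_mul a s hsN]
  have hsq := sum_mul_sub_succ_eq_sum_backDiff_mul r (fun j => s j ^ 2) (N := N) (by simp [hsN])
  rw [hsq]
  simp only [siteValue, sum_sub_distrib, sum_div, hs]
  ring

def signedEnergy {N : ℕ} (a r : Fin N → ℝ) (σ : Fin N → Bool) : ℝ :=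
  (∑ j, (if σ j then (1 : ℝ) else -1) * a j) -
    ∑ j, ∑ j', if j < j' then
      (if σ j then (1 : ℝ) else -1) * (if σ j' then (1 : ℝ) else -1) * r j else 0

theorem sigMax_eq_sup'_signedEnergy (N : ℕ) (a r : Fin N → ℝ) :
    sigMax N a r = univ.sup' univ_nonempty (signedEnergy a r) := rfl

def signSeq {N : ℕ} (σ : Fin N → Bool) (i : ℕ) : ℤ :=
  if h : i < N then (if σ ⟨i, h⟩ then 1 else -1) else 0

theorem signSeq_eq_one_or_neg_one {N : ℕ} (σ : Fin N → Bool) {i : ℕ} (hi : i < N) :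
    signSeq σ i = 1 ∨ signSeq σ i = -1 := by
  unfold signSeq
  split_ifs <;> simp

theorem signedEnergy_eq_sum_range {N : ℕ} (a r : ℕ → ℝ) (σ : Fin N → Bool) :
    signedEnergy (fun j => a j) (fun j => r j) σ =
      ∑ j ∈ range N, (signSeq σ j : ℝ) * a j -
        ∑ j ∈ range N, ∑ j' ∈ range N,
          (if j < j' then (signSeq σ j : ℝ) * signSeq σ j' * r j else 0) := by
  have hsign : ∀ j : Fin N, (if σ j then (1 : ℝ) else -1) = signSeq σ j := by
    intro j; simp [signSeq]
  simp only [signedEnergy, hsign, Fin.lt_def, sum_range]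

theorem even_sum_sub_card {ι : Type*} {s : Finset ι} {ε : ι → ℤ}
    (hε : ∀ i ∈ s, ε i = 1 ∨ ε i = -1) : Even (∑ i ∈ s, ε i - #s) := by
  rw [card_eq_sum_ones, Nat.cast_sum, ← sum_sub_distrib]
  exact even_sum _ fun i hi => by rcases hε i hi with h | h <;> simp [h]

def optimalSuffix (N : ℕ) (e d : ℕ → ℝ) (j : ℕ) : ℤ :=
  if j < N then siteArgmax (N - j) (e j) (d j) else 0

theorem optimalSuffix_sub_succ {N : ℕ} (e d : ℕ → ℝ) {j : ℕ} (hj : j < N) :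
    optimalSuffix N e d j - optimalSuffix N e d (j + 1) = 1 ∨
      optimalSuffix N e d j - optimalSuffix N e d (j + 1) = -1 := by
  unfold optimalSuffix siteArgmax
  simp only [Nat.odd_iff]
  split_ifs <;> omega

def optimalSigns (N : ℕ) (e d : ℕ → ℝ) (j : Fin N) : Bool :=
  optimalSuffix N e d j - optimalSuffix N e d (j + 1) = 1

theorem sum_Ico_signSeq_optimalSigns {N : ℕ} (e d : ℕ → ℝ) {j : ℕ} (hj : j ≤ N) :
    ∑ i ∈ Ico j N, signSeq (optimalSigns N e d) i = optimalSuffix N e d j := by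
  have hsign : ∀ i ∈ Ico j N, signSeq (optimalSigns N e d) i =
      -(optimalSuffix N e d (i + 1) - optimalSuffix N e d i) := by
    intro i hi
    have hi : i < N := (mem_Ico.1 hi).2
    rcases optimalSuffix_sub_succ e d hi with h | h <;>
      simp [signSeq, optimalSigns, hi, h]
  rw [sum_congr rfl hsign, sum_neg_distrib, sum_Ico_sub _ hj]
  simp [optimalSuffix]

theorem sigMax_eq_sum_siteMax (N : ℕ) (a r : ℕ → ℝ) (ha : ∀ j < N, 0 ≤ backDiff a j)
    (har : ∀ j < N, backDiff a j ≤ 2 * backDiff r j) :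
    sigMax N (fun j => a j) (fun j => r j) =
      ∑ j ∈ range N, siteMax (N - j) (backDiff a j) (backDiff r j) + (∑ j ∈ range N, r j) / 2 := by
  have henergy : ∀ σ : Fin N → Bool, signedEnergy (fun j => a j) (fun j => r j) σ =
      ∑ j ∈ range N, siteValue (backDiff a j) (backDiff r j)
          ((∑ i ∈ Ico j N, signSeq σ i : ℤ) : ℝ) + (∑ j ∈ range N, r j) / 2 := by
    intro σ
    rw [signedEnergy_eq_sum_range, energy_eq_sum_siteValue]
    · push_cast; rfl
    · intro j hj
      rcases signSeq_eq_one_or_neg_one σ hj with h | h <;> simp [h]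
  rw [sigMax_eq_sup'_signedEnergy]
  apply le_antisymm
  · refine sup'_le _ _ fun σ _ => ?_
    rw [henergy]
    gcongr with j hj
    have hj : j < N := mem_range.1 hj
    refine siteValue_le_siteMax (ha j hj) (har j hj) ?_
    have hparity := even_sum_sub_card (s := Ico j N) fun i hi =>
      signSeq_eq_one_or_neg_one σ (mem_Ico.1 hi).2
    rwa [Nat.card_Ico] at hparity
  · refine le_sup'_of_le _ (mem_univ (optimalSigns N (backDiff a) (backDiff r))) (le_of_eq ?_)
    rw [henergy]
    congr 1
    refine sum_congr rfl fun j hj => ?_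
    have hj : j < N := mem_range.1 hj
    rw [sum_Ico_signSeq_optimalSigns _ _ hj.le, optimalSuffix, if_pos hj, siteValue_siteArgmax]

theorem siteMax_mono (n : ℕ) {e e' : ℝ} (d : ℝ) (h : e ≤ e') : siteMax n e d ≤ siteMax n e' d := by
  unfold siteMax
  split_ifs
  · linarith
  · exact max_le_max le_rfl (by linarith)

theorem siteMax_two_mul_sub (n : ℕ) {e d : ℝ} (h : e ≤ d) :
    siteMax n (2 * d - e) d = siteMax n e d + 2 * (d - e) := by
  unfold siteMax
  split_ifs
  · ring
  · rw [max_eq_right (by linarith), max_eq_left (by linarith)]; ring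

theorem sigMax_mono (N : ℕ) (a a' r : ℕ → ℝ) (h0 : ∀ j < N, 0 ≤ backDiff a j)
    (hle : ∀ j < N, backDiff a j ≤ backDiff a' j) (h2 : ∀ j < N, backDiff a' j ≤ 2 * backDiff r j) :
    sigMax N (fun j => a j) (fun j => r j) ≤ sigMax N (fun j => a' j) (fun j => r j) := by
  rw [sigMax_eq_sum_siteMax N a r h0 fun j hj => (hle j hj).trans (h2 j hj),
    sigMax_eq_sum_siteMax N a' r (fun j hj => (h0 j hj).trans (hle j hj)) h2]
  gcongr with j hj
  exact siteMax_mono _ _ (hle j (mem_range.1 hj))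

theorem sigMax_two_mul_sub (N : ℕ) (a r : ℕ → ℝ) (h0 : ∀ j < N + 1, 0 ≤ backDiff a j)
    (h1 : ∀ j < N + 1, backDiff a j ≤ backDiff r j) :
    sigMax (N + 1) (fun j => 2 * r j - a j) (fun j => r j) =
      sigMax (N + 1) (fun j => a j) (fun j => r j) + 2 * (r N - a N) := by
  have hΔ : ∀ j, backDiff (fun n => 2 * r n - a n) j = 2 * backDiff r j - backDiff a j := by
    intro j; simpa [sub_eq_add_neg] using backDiff_linear_comb 2 (-1) r a j
  have hΔsub : ∀ j, backDiff (fun n => r n - a n) j = backDiff r j - backDiff a j := by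
    intro j; simpa [sub_eq_add_neg] using backDiff_linear_comb 1 (-1) r a j
  rw [sigMax_eq_sum_siteMax (N + 1) (fun n => 2 * r n - a n) r
      (fun j hj => by rw [hΔ]; linarith [h0 j hj, h1 j hj])
      (fun j hj => by rw [hΔ]; linarith [h0 j hj]),
    sigMax_eq_sum_siteMax (N + 1) a r h0 fun j hj => by linarith [h0 j hj, h1 j hj]]
  have htelescope : ∑ j ∈ range (N + 1), 2 * (backDiff r j - backDiff a j) = 2 * (r N - a N) := by
    rw [← mul_sum]
    simp only [← hΔsub]
    rw [sum_range_succ_backDiff]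
  rw [← htelescope, add_right_comm, ← sum_add_distrib]
  congr 1
  refine sum_congr rfl fun j hj => ?_
  rw [hΔ, siteMax_two_mul_sub _ (h1 j (mem_range.1 hj))]

theorem sigMax_sub_two_mul_le (N : ℕ) {P Q : ℕ → ℝ} {k l : ℝ} (hk : 1 ≤ k) (hl : 1 ≤ l)
    (hQ0 : ∀ j, 0 ≤ backDiff Q j) (hQP : ∀ j, backDiff Q j ≤ backDiff P j) :
    sigMax N (fun j => (k - 1) * P j + (l - 1) * Q j) (fun j => k * P j + l * Q j) ≤
      sigMax N (fun j => (k - 1) * P j + (l + 1) * Q j) (fun j => k * P j + l * Q j) := by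
  refine sigMax_mono N (fun n => (k - 1) * P n + (l - 1) * Q n)
    (fun n => (k - 1) * P n + (l + 1) * Q n) (fun n => k * P n + l * Q n)
    (fun j _ => ?_) (fun j _ => ?_) (fun j _ => ?_) <;>
  simp only [backDiff_linear_comb] <;>
  nlinarith [hQ0 j, hQP j]

theorem sigMax_reflect_eq (M : ℕ) {P Q : ℕ → ℝ} {k l : ℝ} (hk : 1 ≤ k) (hl : -1 ≤ l)
    (hQ0 : ∀ j, 0 ≤ backDiff Q j) (hQP : ∀ j, backDiff Q j ≤ backDiff P j) :
    sigMax (M + 1) (fun j => (k + 1) * P j + (l - 1) * Q j) (fun j => k * P j + l * Q j) =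
      sigMax (M + 1) (fun j => (k - 1) * P j + (l + 1) * Q j) (fun j => k * P j + l * Q j) +
        2 * (P M - Q M) := by
  have h := sigMax_two_mul_sub M (fun n => (k - 1) * P n + (l + 1) * Q n)
    (fun n => k * P n + l * Q n) (fun j _ => ?_) (fun j _ => ?_)
  · rw [show (fun j : Fin (M + 1) => (k + 1) * P j + (l - 1) * Q j) =
        fun j : Fin (M + 1) => 2 * (k * P j + l * Q j) - ((k - 1) * P j + (l + 1) * Q j) from
      funext fun j => by ring, h]
    ring
  all_goals simp only [backDiff_linear_comb]; nlinarith [hQ0 j, hQP j]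

theorem sigMax_identity_of_monotone (M : ℕ) {P Q : ℕ → ℝ} {L k l : ℝ} (hP : Monotone P)
    (hP0 : 0 ≤ P 0) (hL : 0 ≤ L) (hk : 1 ≤ k) (hl : 1 ≤ l) (hQ : ∀ n, Q n = max 0 (P n - L)) :
    sigMax (M + 1) (fun j => (k - 1) * P j + (l + 1) * Q j) (fun j => k * P j + l * Q j) =
      max (sigMax (M + 1) (fun j => (k - 1) * P j + (l - 1) * Q j) (fun j => k * P j + l * Q j))
        (sigMax (M + 1) (fun j => (k + 1) * P j + (l - 1) * Q j) (fun j => k * P j + l * Q j) -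
          2 * L) := by
  have hQfun : Q = fun n => max 0 (P n - L) := funext hQ
  have hQ0 : ∀ j, 0 ≤ backDiff Q j := by
    rw [hQfun]
    exact backDiff_nonneg_of_monotone (fun m n h => max_le_max le_rfl (by linarith [hP h]))
      (le_max_left _ _)
  have hQP : ∀ j, backDiff Q j ≤ backDiff P j := by
    rw [hQfun]
    exact backDiff_max_sub_le hP hP0 hL
  have hle := sigMax_sub_two_mul_le (M + 1) hk hl hQ0 hQP
  rw [sigMax_reflect_eq M hk (by linarith) hQ0 hQP]
  rcases le_or_gt L (P M) with hLP | hPL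
  · rw [hQ M, max_eq_right (by linarith : 0 ≤ P M - L), max_eq_right (by linarith)]
    ring
  · have hQ_fin : ∀ j : Fin (M + 1), Q j = 0 := fun j => by
      rw [hQ]; exact max_eq_left (by linarith [hP (Nat.lt_succ_iff.1 j.isLt)])
    have hQM : Q M = 0 := hQ_fin (Fin.last M)
    simp only [hQ_fin, mul_zero] at hle ⊢
    rw [hQM, max_eq_left (by linarith)]

end

theorem key_identity_utoda (N' : ℕ) (hN' : 1 ≤ N') (p : Fin N' → ℝ)
    (L k l : ℝ) (hp0 : ∀ j, 0 ≤ p j) (hpmono : Monotone p)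
    (hL : 0 ≤ L) (hk : 1 ≤ k) (hl : 1 ≤ l)
    (q r : Fin N' → ℝ)
    (hq : ∀ j, q j = max 0 (p j - L))
    (hr : ∀ j, r j = k * p j + l * q j) :
    sigMax N' (fun j => (k - 1) * p j + (l + 1) * q j) r =
      max (sigMax N' (fun j => (k - 1) * p j + (l - 1) * q j) r)
          (sigMax N' (fun j => (k + 1) * p j + (l - 1) * q j) r - 2 * L) := by
  obtain ⟨M, rfl⟩ : ∃ M, N' = M + 1 := ⟨N' - 1, by omega⟩
  have hclamp : ∀ j : Fin (M + 1), Fin.clamp j M = j := fun j =>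
    Fin.ext (min_eq_left (Nat.lt_succ_iff.1 j.isLt))
  have key := sigMax_identity_of_monotone M (P := fun n => p (Fin.clamp n M))
    (Q := fun n => q (Fin.clamp n M)) (hpmono.comp Fin.clamp_monotone) (hp0 _) hL hk hl
    fun n => hq _
  simp only [hclamp] at key
  rwa [show r = fun j => k * p j + l * q j from funext hr]
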